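/- Let G be a matching covered graph obtained by splicing matching covered graphs G1 at vertex u and G2 at vertex v (with deg(u) = deg(v) and a bijection π between ∂(u) and ∂(v)): G is the union of G1 − u and G2 − v with, for each edge e ∈ ∂(u), an edge joining the end of e in G1 − u to the end of π(e) in G2 − v. Then G is matching covered. -/

import Mathlib

/-!
If `M₁` and `M₂` are perfect matchings of `G₁` and `G₂` such that `π` sends the `M₁`-edge at `u`
to the `M₂`-edge at `v`, then `M₁ - u`, `M₂ - v` and the splice edge joining the two exposed
vertices form a perfect matching of the splice. Any perfect matching of one side can be completed
to such a pair, since the relevant edge at `u` (or `v`) lies in a perfect matching of the other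
graph; so every edge of the splice lies in a perfect matching.

Connectivity reduces to that of `G₁ - u` and `G₂ - v`. Deleting a vertex `w` of a matching covered
graph `G` cannot disconnect it: otherwise some component `S` of `G - w` is not all of `G - w`, and `w`
has neighbours `s ∈ S` and `t ∉ S`; a perfect matching through `ws` leaves `|S|` odd and one
through `wt` leaves it even.
-/

open SimpleGraph

/-- A perfect matching of `G`, viewed as a set of edges: every edge of `M` is an
edge of `G`, and every vertex lies in exactly one edge of `M`. -/
def IsPM {V : Type*} (G : SimpleGraph V) (M : Set (Sym2 V)) : Prop :=
  M ⊆ G.edgeSet ∧ ∀ v : V, ∃! e, e ∈ M ∧ v ∈ e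

/-- A matching covered graph: connected, of order at least two, in which every
edge lies in some perfect matching. -/
def MatchingCovered {V : Type*} (G : SimpleGraph V) : Prop :=
  G.Connected ∧ 2 ≤ Nat.card V ∧ ∀ e ∈ G.edgeSet, ∃ M, IsPM G M ∧ e ∈ M

/-- The edge cut `∂(X)`: edges of `G` with exactly one end in `X`. -/
def edgeCut {V : Type*} (G : SimpleGraph V) (X : Set V) : Set (Sym2 V) :=
  {e | e ∈ G.edgeSet ∧ ∃ x y, e = s(x, y) ∧ x ∈ X ∧ y ∉ X}

/-- The number of odd components of `G - S`. -/
noncomputable def numOddComponents {V : Type*} (G : SimpleGraph V) (S : Set V) : ℕ :=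
  Nat.card {c : (G.induce (Sᶜ : Set V)).ConnectedComponent // Odd (Nat.card c.supp)}

/-- A barrier: a vertex set `B` such that `G - B` has exactly `|B|` odd components. -/
def IsBarrier {V : Type*} (G : SimpleGraph V) (B : Set V) : Prop :=
  numOddComponents G B = B.ncard

/-- The cut `∂(X)` is tight: every perfect matching meets it in exactly one edge. -/
def TightCut {V : Type*} (G : SimpleGraph V) (X : Set V) : Prop :=
  ∀ M, IsPM G M → (M ∩ edgeCut G X).ncard = 1

/-- The cut `∂(X)` is separating: every edge lies in a perfect matching meeting
the cut in exactly one edge. -/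
def SeparatingCut {V : Type*} (G : SimpleGraph V) (X : Set V) : Prop :=
  ∀ e ∈ G.edgeSet, ∃ M, IsPM G M ∧ e ∈ M ∧ (M ∩ edgeCut G X).ncard = 1

/-- The splice of `G₁` at `u` with `G₂` at `v`, with respect to the bijection `π`
between the edges (equivalently, neighbours) at `u` and at `v`: the union of
`G₁ - u` and `G₂ - v`, where for each edge `e` at `u`, the end of `e` in `G₁ - u`
is joined to the end of `π(e)` in `G₂ - v`. -/
def splice {V₁ V₂ : Type*} (G₁ : SimpleGraph V₁) (G₂ : SimpleGraph V₂)
    (u : V₁) (v : V₂) (π : ↥(G₁.neighborSet u) ≃ ↥(G₂.neighborSet v)) :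
    SimpleGraph ({x : V₁ // x ≠ u} ⊕ {y : V₂ // y ≠ v}) where
  Adj a b :=
    match a, b with
    | .inl a, .inl b => G₁.Adj ↑a ↑b
    | .inl a, .inr b => ∃ ha : (↑a : V₁) ∈ G₁.neighborSet u, ↑(π ⟨↑a, ha⟩) = (↑b : V₂)
    | .inr b, .inl a => ∃ ha : (↑a : V₁) ∈ G₁.neighborSet u, ↑(π ⟨↑a, ha⟩) = (↑b : V₂)
    | .inr a, .inr b => G₂.Adj ↑a ↑b
  symm := by
    refine ⟨?_⟩
    rintro (a | a) (b | b) h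
    · exact h.symm
    · exact h
    · exact h
    · exact h.symm
  loopless := by
    refine ⟨?_⟩
    rintro (a | a) h
    · exact G₁.irrefl h
    · exact G₂.irrefl h


namespace IsPM

variable {V : Type*} {G : SimpleGraph V} {M : Set (Sym2 V)}

theorem existsUnique_mem (hM : IsPM G M) (x : V) : ∃! y, s(x, y) ∈ M := by
  obtain ⟨e, ⟨heM, hxe⟩, huniq⟩ := hM.2 x
  obtain ⟨y, rfl⟩ := Sym2.mem_iff_exists.mp hxe
  exact ⟨y, heM, fun z hz => Sym2.congr_right.mp (huniq _ ⟨hz, Sym2.mem_mk_left x z⟩)⟩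

theorem eq_of_mem (hM : IsPM G M) {x y z : V} (hy : s(x, y) ∈ M) (hz : s(x, z) ∈ M) :
    y = z :=
  (hM.existsUnique_mem x).unique hy hz

theorem adj_of_mem (hM : IsPM G M) {x y : V} (h : s(x, y) ∈ M) : G.Adj x y :=
  hM.1 h

theorem even_card_of_forall_mem (hM : IsPM G M) {S : Finset V}
    (hS : ∀ x ∈ S, ∀ y, s(x, y) ∈ M → y ∈ S) : Even S.card := by
  let N : G.Subgraph :=
    { verts := S
      Adj x y := x ∈ S ∧ s(x, y) ∈ M
      adj_sub := fun h => hM.adj_of_mem h.2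
      edge_vert := fun h => h.1
      symm := ⟨fun x y h => ⟨hS x h.1 y h.2, Sym2.eq_swap ▸ h.2⟩⟩ }
  have hN : N.IsMatching := fun x hx => by
    obtain ⟨y, hy, huniq⟩ := hM.existsUnique_mem x
    exact ⟨y, ⟨hx, hy⟩, fun z hz => huniq z hz.2⟩
  simpa [N] using hN.even_card

theorem even_card_iff_notMem {S : Finset V} {w t : V} (hM : IsPM G M) (hwS : w ∉ S)
    (hS : ∀ x ∈ S, ∀ y, G.Adj x y → y ∈ S ∨ y = w) (hwt : s(w, t) ∈ M) :
    Even S.card ↔ t ∉ S := by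
  classical
  have hmem : ∀ x ∈ S, ∀ y, s(x, y) ∈ M → x ≠ t → y ∈ S := fun x hx y hy hxt =>
    (hS x hx y (hM.adj_of_mem hy)).resolve_right fun hyw =>
      hxt (hM.eq_of_mem (hyw ▸ Sym2.eq_swap ▸ hy) hwt)
  by_cases ht : t ∈ S
  · suffices Even (S.erase t).card by
      rw [← Finset.card_erase_add_one ht]
      simpa [Nat.even_add_one, ht] using this
    refine hM.even_card_of_forall_mem fun x hx y hy => ?_
    obtain ⟨hxt, hxS⟩ := Finset.mem_erase.mp hx
    refine Finset.mem_erase.mpr ⟨?_, hmem x hxS y hy hxt⟩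
    rintro rfl
    exact hwS (hM.eq_of_mem (Sym2.eq_swap ▸ hwt) (Sym2.eq_swap ▸ hy) ▸ hxS)
  · exact iff_of_true (hM.even_card_of_forall_mem fun x hx y hy =>
      hmem x hx y hy (ne_of_mem_of_not_mem hx ht)) ht

end IsPM

theorem isPM_fromRel {V : Type*} {G : SimpleGraph V} {r : V → V → Prop} (hr : Std.Symm r)
    (hrG : ∀ x y, r x y → G.Adj x y) (huniq : ∀ x, ∃! y, r x y) :
    IsPM G (Sym2.fromRel hr) := by
  refine ⟨fun e he => ?_, fun x => ?_⟩
  · induction e using Sym2.ind with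
    | _ x y => exact hrG x y (Sym2.fromRel_prop.mp he)
  · obtain ⟨y, hxy, hy⟩ := huniq x
    refine ⟨s(x, y), ⟨Sym2.fromRel_prop.mpr hxy, Sym2.mem_mk_left x y⟩, ?_⟩
    rintro e ⟨he, hxe⟩
    obtain ⟨z, rfl⟩ := Sym2.mem_iff_exists.mp hxe
    rw [hy z (Sym2.fromRel_prop.mp he)]

section DeleteVertex

variable {V : Type*} {G : SimpleGraph V}

theorem SimpleGraph.Preconnected.exists_adj_mem_of_forall_adj_mem_or_eq {S : Set V} {w x : V}
    (hG : G.Preconnected) (hS : ∀ x ∈ S, ∀ y, G.Adj x y → y ∈ S ∨ y = w) (hwS : w ∉ S)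
    (hx : x ∈ S) : ∃ s ∈ S, G.Adj w s := by
  obtain ⟨p⟩ := hG x w
  obtain ⟨d, -, hd₁, hd₂⟩ := p.exists_boundary_dart S hx hwS
  obtain rfl := (hS _ hd₁ _ d.adj).resolve_left hd₂
  exact ⟨_, hd₁, d.adj.symm⟩

theorem MatchingCovered.nontrivial [Finite V] (hG : MatchingCovered G) : Nontrivial V :=
  Finite.one_lt_card_iff_nontrivial.mp hG.2.1

theorem MatchingCovered.connected_comap_ne [Fintype V] (hG : MatchingCovered G) (w : V) :
    (G.comap (Subtype.val : {x : V // x ≠ w} → V)).Connected := by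
  classical
  have := hG.nontrivial
  obtain ⟨x₀, hx₀⟩ := exists_ne w
  have : Nonempty {x : V // x ≠ w} := ⟨⟨x₀, hx₀⟩⟩
  refine ⟨fun a b => ?_⟩
  by_contra hab
  set H := G.comap (Subtype.val : {x : V // x ≠ w} → V)
  let S : Finset V := {x | ∃ hx : x ≠ w, H.Reachable a ⟨x, hx⟩}
  have hwS : w ∉ S := by simp [S]
  have hS : ∀ x ∈ S, ∀ y, G.Adj x y → y ∈ S ∨ y = w := by
    simp only [S, Finset.mem_filter, Finset.mem_univ, true_and]
    rintro x ⟨hxw, hax⟩ y hxy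
    by_cases hyw : y = w
    · exact .inr hyw
    · exact .inl ⟨hyw, hax.trans (Adj.reachable (G := H) hxy)⟩
  let T : Finset V := {x | x ≠ w ∧ x ∉ S}
  have hwT : w ∉ T := by simp [T]
  have hT : ∀ x ∈ T, ∀ y, G.Adj x y → y ∈ T ∨ y = w := by
    simp only [T, Finset.mem_filter, Finset.mem_univ, true_and]
    rintro x ⟨hxw, hxS⟩ y hxy
    by_cases hyw : y = w
    · exact .inr hyw
    · refine .inl ⟨hyw, fun hyS => hxS ?_⟩
      exact (hS y hyS x hxy.symm).resolve_right hxw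
  have haS : (a : V) ∈ S := by simp [S, a.2]
  have hbT : (b : V) ∈ T := by simp [T, S, b.2, hab]
  obtain ⟨s, hsS, hws⟩ := hG.1.preconnected.exists_adj_mem_of_forall_adj_mem_or_eq hS hwS haS
  obtain ⟨t, htT, hwt⟩ := hG.1.preconnected.exists_adj_mem_of_forall_adj_mem_or_eq hT hwT hbT
  obtain ⟨M₁, hM₁, hwsM⟩ := hG.2.2 s(w, s) hws
  obtain ⟨M₂, hM₂, hwtM⟩ := hG.2.2 s(w, t) hwt
  have hodd : ¬ Even S.card := by
    simpa [hM₁.even_card_iff_notMem hwS hS hwsM] using hsS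
  exact hodd ((hM₂.even_card_iff_notMem hwS hS hwtM).mpr (Finset.mem_filter.mp htT).2.2)

end DeleteVertex

section Splice

variable {V₁ V₂ : Type*}

/-- Adjacency in the perfect matching of the splice assembled from `M₁` and `M₂`. -/
def spliceRel (u : V₁) (v : V₂) (M₁ : Set (Sym2 V₁)) (M₂ : Set (Sym2 V₂)) :
    {x : V₁ // x ≠ u} ⊕ {y : V₂ // y ≠ v} → {x : V₁ // x ≠ u} ⊕ {y : V₂ // y ≠ v} → Prop
  | .inl a, .inl b => s((a : V₁), b) ∈ M₁
  | .inl a, .inr b => s(u, (a : V₁)) ∈ M₁ ∧ s(v, (b : V₂)) ∈ M₂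
  | .inr b, .inl a => s(u, (a : V₁)) ∈ M₁ ∧ s(v, (b : V₂)) ∈ M₂
  | .inr a, .inr b => s((a : V₂), b) ∈ M₂

theorem spliceRel_symm (u : V₁) (v : V₂) (M₁ : Set (Sym2 V₁)) (M₂ : Set (Sym2 V₂)) :
    Std.Symm (spliceRel u v M₁ M₂) := by
  refine ⟨?_⟩
  rintro (a | a) (b | b) h
  · exact (Sym2.eq_swap ▸ h : s((b : V₁), a) ∈ M₁)
  · exact h
  · exact h
  · exact (Sym2.eq_swap ▸ h : s((b : V₂), a) ∈ M₂)

variable {u : V₁} {v : V₂} {M₁ : Set (Sym2 V₁)} {M₂ : Set (Sym2 V₂)}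

theorem spliceRel_swap (x y : {x : V₁ // x ≠ u} ⊕ {y : V₂ // y ≠ v}) :
    spliceRel v u M₂ M₁ x.swap y.swap ↔ spliceRel u v M₁ M₂ x y := by
  rcases x with a | a <;> rcases y with b | b
  all_goals first | exact Iff.rfl | exact and_comm

theorem spliceRel_existsUnique_inl {G₁ : SimpleGraph V₁} {G₂ : SimpleGraph V₂}
    (hM₁ : IsPM G₁ M₁) (hM₂ : IsPM G₂ M₂) (a : {x : V₁ // x ≠ u}) :
    ∃! y, spliceRel u v M₁ M₂ (.inl a) y := by
  obtain ⟨c, hac, -⟩ := hM₁.existsUnique_mem a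
  by_cases hcu : c = u
  · subst hcu
    obtain ⟨d, hvd, -⟩ := hM₂.existsUnique_mem v
    refine ⟨.inr ⟨d, (hM₂.adj_of_mem hvd).ne'⟩, ⟨Sym2.eq_swap ▸ hac, hvd⟩, ?_⟩
    rintro (b | b) h
    · exact absurd (hM₁.eq_of_mem h hac) b.2
    · exact congrArg Sum.inr (Subtype.ext (hM₂.eq_of_mem h.2 hvd))
  · refine ⟨.inl ⟨c, hcu⟩, hac, ?_⟩
    rintro (b | b) h
    · exact congrArg Sum.inl (Subtype.ext (hM₁.eq_of_mem h hac))
    · exact absurd (hM₁.eq_of_mem (Sym2.eq_swap ▸ h.1) hac).symm hcu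

theorem spliceRel_existsUnique {G₁ : SimpleGraph V₁} {G₂ : SimpleGraph V₂}
    (hM₁ : IsPM G₁ M₁) (hM₂ : IsPM G₂ M₂) (x : {x : V₁ // x ≠ u} ⊕ {y : V₂ // y ≠ v}) :
    ∃! y, spliceRel u v M₁ M₂ x y := by
  rcases x with a | b
  · exact spliceRel_existsUnique_inl hM₁ hM₂ a
  · exact (Equiv.sumComm _ _).existsUnique_congr (fun y => (spliceRel_swap (.inr b) y).symm)
      |>.mpr (spliceRel_existsUnique_inl hM₂ hM₁ b)

end Splice

section SpliceMatching

variable {V₁ V₂ : Type*} {G₁ : SimpleGraph V₁} {G₂ : SimpleGraph V₂} {u : V₁} {v : V₂}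
  {π : ↥(G₁.neighborSet u) ≃ ↥(G₂.neighborSet v)} {M₁ : Set (Sym2 V₁)} {M₂ : Set (Sym2 V₂)}

def SpliceCompatible (π : ↥(G₁.neighborSet u) ≃ ↥(G₂.neighborSet v)) (M₁ : Set (Sym2 V₁))
    (M₂ : Set (Sym2 V₂)) : Prop :=
  ∀ c (hc : c ∈ G₁.neighborSet u), s(u, c) ∈ M₁ → s(v, ↑(π ⟨c, hc⟩)) ∈ M₂

theorem splice_adj_of_spliceRel (hM₁ : IsPM G₁ M₁) (hM₂ : IsPM G₂ M₂)
    (hπ : SpliceCompatible π M₁ M₂)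
    {x y : {x : V₁ // x ≠ u} ⊕ {y : V₂ // y ≠ v}} (h : spliceRel u v M₁ M₂ x y) :
    (splice G₁ G₂ u v π).Adj x y := by
  have cross : ∀ (a : {x : V₁ // x ≠ u}) (b : {y : V₂ // y ≠ v}),
      s(u, (a : V₁)) ∈ M₁ → s(v, (b : V₂)) ∈ M₂ →
      ∃ ha : (a : V₁) ∈ G₁.neighborSet u, ↑(π ⟨a, ha⟩) = (b : V₂) := fun a b ha hb =>
    ⟨hM₁.adj_of_mem ha, hM₂.eq_of_mem (hπ a _ ha) hb⟩
  rcases x with a | a <;> rcases y with b | b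
  · exact hM₁.adj_of_mem h
  · exact cross a b h.1 h.2
  · exact cross b a h.1 h.2
  · exact hM₂.adj_of_mem h

theorem isPM_splice (hM₁ : IsPM G₁ M₁) (hM₂ : IsPM G₂ M₂)
    (hπ : SpliceCompatible π M₁ M₂) :
    IsPM (splice G₁ G₂ u v π) (Sym2.fromRel (spliceRel_symm u v M₁ M₂)) :=
  isPM_fromRel _ (fun _ _ => splice_adj_of_spliceRel hM₁ hM₂ hπ) (spliceRel_existsUnique hM₁ hM₂)

theorem MatchingCovered.exists_isPM_right (hG₂ : MatchingCovered G₂) (hM₁ : IsPM G₁ M₁)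
    (π : ↥(G₁.neighborSet u) ≃ ↥(G₂.neighborSet v)) :
    ∃ M₂, IsPM G₂ M₂ ∧ SpliceCompatible π M₁ M₂ := by
  obtain ⟨c, huc, -⟩ := hM₁.existsUnique_mem u
  have hc : c ∈ G₁.neighborSet u := hM₁.adj_of_mem huc
  obtain ⟨M₂, hM₂, hvM₂⟩ := hG₂.2.2 s(v, ↑(π ⟨c, hc⟩)) (π ⟨c, hc⟩).2
  refine ⟨M₂, hM₂, fun c' hc' huc' => ?_⟩
  obtain rfl := hM₁.eq_of_mem huc' huc
  exact hvM₂

theorem MatchingCovered.exists_isPM_left (hG₁ : MatchingCovered G₁) (hM₂ : IsPM G₂ M₂)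
    (π : ↥(G₁.neighborSet u) ≃ ↥(G₂.neighborSet v)) :
    ∃ M₁, IsPM G₁ M₁ ∧ SpliceCompatible π M₁ M₂ := by
  obtain ⟨d, hvd, -⟩ := hM₂.existsUnique_mem v
  set c := π.symm ⟨d, hM₂.adj_of_mem hvd⟩
  obtain ⟨M₁, hM₁, huM₁⟩ := hG₁.2.2 s(u, ↑c) c.2
  refine ⟨M₁, hM₁, fun c' hc' huc' => ?_⟩
  obtain rfl := hM₁.eq_of_mem huc' huM₁
  simpa [c] using hvd

end SpliceMatching

section SpliceMatchingCovered

variable {V₁ V₂ : Type*} {G₁ : SimpleGraph V₁} {G₂ : SimpleGraph V₂} {u : V₁} {v : V₂}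
  (π : ↥(G₁.neighborSet u) ≃ ↥(G₂.neighborSet v))

theorem splice_connected [Fintype V₁] [Fintype V₂] (hG₁ : MatchingCovered G₁)
    (hG₂ : MatchingCovered G₂) : (splice G₁ G₂ u v π).Connected := by
  have := hG₁.nontrivial
  obtain ⟨c, huc⟩ := hG₁.1.preconnected.exists_adj_of_nontrivial u
  let c₁ : {x : V₁ // x ≠ u} := ⟨c, huc.ne'⟩
  let c₂ : {y : V₂ // y ≠ v} := ⟨π ⟨c, huc⟩, (π ⟨c, huc⟩).2.ne'⟩
  have hreach : ∀ x, (splice G₁ G₂ u v π).Reachable x (.inl c₁) := by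
    rintro (a | b)
    · exact ((hG₁.connected_comap_ne u).preconnected a c₁).map ⟨Sum.inl, id⟩
    · have hc : (splice G₁ G₂ u v π).Adj (.inr c₂) (.inl c₁) := ⟨huc, rfl⟩
      exact (((hG₂.connected_comap_ne v).preconnected b c₂).map ⟨Sum.inr, id⟩).trans
        hc.reachable
  have : Nonempty ({x : V₁ // x ≠ u} ⊕ {y : V₂ // y ≠ v}) := ⟨.inl c₁⟩
  exact ⟨fun x y => (hreach x).trans (hreach y).symm⟩

theorem two_le_card_splice [Finite V₁] [Finite V₂] (hG₁ : MatchingCovered G₁)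
    (hG₂ : MatchingCovered G₂) : 2 ≤ Nat.card ({x : V₁ // x ≠ u} ⊕ {y : V₂ // y ≠ v}) := by
  have := hG₁.nontrivial
  have := hG₂.nontrivial
  have : Nonempty {x : V₁ // x ≠ u} := nonempty_subtype.mpr (exists_ne u)
  have : Nonempty {y : V₂ // y ≠ v} := nonempty_subtype.mpr (exists_ne v)
  rw [Nat.card_sum]
  exact Nat.add_le_add Nat.card_pos Nat.card_pos

theorem exists_isPM_splice_mem (hG₁ : MatchingCovered G₁) (hG₂ : MatchingCovered G₂)
    {e : Sym2 ({x : V₁ // x ≠ u} ⊕ {y : V₂ // y ≠ v})} (he : e ∈ (splice G₁ G₂ u v π).edgeSet) :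
    ∃ M, IsPM (splice G₁ G₂ u v π) M ∧ e ∈ M := by
  have cross : ∀ (a : {x : V₁ // x ≠ u}) (b : {y : V₂ // y ≠ v}),
      (splice G₁ G₂ u v π).Adj (.inl a) (.inr b) →
      ∃ M, IsPM (splice G₁ G₂ u v π) M ∧ s(.inl a, .inr b) ∈ M := by
    rintro a b ⟨hua, hab⟩
    obtain ⟨M₁, hM₁, huaM₁⟩ := hG₁.2.2 s(u, ↑a) hua
    obtain ⟨M₂, hM₂, hπ⟩ := hG₂.exists_isPM_right hM₁ π
    exact ⟨_, isPM_splice hM₁ hM₂ hπ, Sym2.fromRel_prop.mpr ⟨huaM₁, hab ▸ hπ _ hua huaM₁⟩⟩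
  induction e using Sym2.ind with | _ x y => ?_
  rcases x with a | b <;> rcases y with a' | b'
  · obtain ⟨M₁, hM₁, heM₁⟩ := hG₁.2.2 s(↑a, ↑a') he
    obtain ⟨M₂, hM₂, hπ⟩ := hG₂.exists_isPM_right hM₁ π
    exact ⟨_, isPM_splice hM₁ hM₂ hπ, Sym2.fromRel_prop.mpr heM₁⟩
  · exact cross a b' he
  · exact Sym2.eq_swap (a := Sum.inr b) ▸ cross a' b he.symm
  · obtain ⟨M₂, hM₂, heM₂⟩ := hG₂.2.2 s(↑b, ↑b') he
    obtain ⟨M₁, hM₁, hπ⟩ := hG₁.exists_isPM_left hM₂ π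
    exact ⟨_, isPM_splice hM₁ hM₂ hπ, Sym2.fromRel_prop.mpr heM₂⟩

end SpliceMatchingCovered

theorem stmt19_general {V₁ V₂ : Type*} [Fintype V₁] [Fintype V₂]
    (G₁ : SimpleGraph V₁) (G₂ : SimpleGraph V₂)
    (u : V₁) (v : V₂) (π : ↥(G₁.neighborSet u) ≃ ↥(G₂.neighborSet v))
    (hG₁ : MatchingCovered G₁) (hG₂ : MatchingCovered G₂) :
    MatchingCovered (splice G₁ G₂ u v π) :=
  ⟨splice_connected π hG₁ hG₂, two_le_card_splice hG₁ hG₂,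
    fun _ he => exists_isPM_splice_mem π hG₁ hG₂ he⟩

/-- The splice of two matching covered graphs is matching covered. -/
theorem stmt19 {V₁ V₂ : Type*} [Fintype V₁] [Fintype V₂] [DecidableEq V₁]
    [DecidableEq V₂] (G₁ : SimpleGraph V₁) (G₂ : SimpleGraph V₂)
    (u : V₁) (v : V₂) (π : ↥(G₁.neighborSet u) ≃ ↥(G₂.neighborSet v))
    (hG₁ : MatchingCovered G₁) (hG₂ : MatchingCovered G₂) :
    MatchingCovered (splice G₁ G₂ u v π) :=
  stmt19_general G₁ G₂ u v π hG₁ hG₂
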